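/- The norm of JH* is octahedral; equivalently, for every ε > 0 and every finite-dimensional subspace Y of JH* there exists f ∈ S_{JH*} with ‖λf + g‖ > (1−ε)(|λ| + ‖g‖) for all g ∈ Y and scalars λ. -/

import Mathlib

/-!
The level averages `ζ_k` (weight `2⁻ᵏ` on each of the `2ᵏ` nodes of level `k`) have norm one and
are normed by the level-sum functionals `f_k`, which have norm at most one because the singletons of
a level form an admissible family. An admissible family whose segments start at level `p` has at
most `2ᵖ` members; hence a vector bounded by `2^(-level)` has norm at most `2`, so the sums
`∑ ±ζ_k` stay bounded and `g ζ_k → 0` for every `g ∈ JH*`; and adding `ζ_k` to a vector `c` living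
below level `N ≤ k` costs at most `2ᴺ 2⁻ᵏ` beyond `max ‖c‖ 1`. Given norm-one `a_1, …, a_n ∈ JH*`
almost normed by such vectors `c_i`, for `k` large `(f_k + a_i)(c_i + ζ_k) ≈ 2` while
`‖c_i + ζ_k‖ ≈ 1`, so `‖f_k + a_i‖ ≈ 2`. This condition on finite sets of unit vectors gives
octahedrality by approximating the unit sphere of a finite-dimensional `Y` by a finite net.
-/

open Metric

def dLe (a b : ℕ × ℕ) : Prop := a.1 ≤ b.1 ∧ b.2 / 2 ^ (b.1 - a.1) = a.2

def IsPQSegD (S : Finset (ℕ × ℕ)) (p q : ℕ) : Prop :=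
  (∀ t ∈ S, t.2 < 2 ^ t.1) ∧
  (∀ t ∈ S, p ≤ t.1 ∧ t.1 ≤ q) ∧
  (∀ k : ℕ, p ≤ k → k ≤ q → ∃! t, t ∈ S ∧ t.1 = k) ∧
  (∀ s ∈ S, ∀ t ∈ S, dLe s t ∨ dLe t s)

def AdmissibleD (F : Finset (Finset (ℕ × ℕ))) : Prop :=
  ∃ p q : ℕ, p ≤ q ∧ (∀ S ∈ F, IsPQSegD S p q) ∧
    ∀ S ∈ F, ∀ S' ∈ F, S ≠ S' → Disjoint S S'

noncomputable def jhNorm (x : (ℕ × ℕ) →₀ ℝ) : ℝ :=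
  sSup {r : ℝ | ∃ F : Finset (Finset (ℕ × ℕ)), AdmissibleD F ∧
    r = ∑ S ∈ F, |∑ t ∈ S, x t|}

open Finset Filter

def IsOctahedral (Z : Type*) [NormedAddCommGroup Z] [NormedSpace ℝ Z] : Prop :=
  ∀ ε : ℝ, 0 < ε → ∀ Y : Submodule ℝ Z, FiniteDimensional ℝ Y →
    ∃ z : Z, ‖z‖ = 1 ∧ ∀ y ∈ Y, ∀ l : ℝ, (1 - ε) * (|l| + ‖y‖) ≤ ‖l • z + y‖

section Octahedral

variable {Z : Type*} [NormedAddCommGroup Z] [NormedSpace ℝ Z]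

theorem one_add_mul_one_sub_le_norm_smul_add {z a : Z} {δ l : ℝ} (hz : ‖z‖ ≤ 1)
    (ha : ‖a‖ ≤ 1) (hza : 2 - δ ≤ ‖z + a‖) (hl : 0 ≤ l) :
    (1 + l) * (1 - δ) ≤ ‖l • z + a‖ := by
  have hδ : 0 ≤ δ := by linarith [norm_add_le z a]
  rcases le_total l 1 with hl1 | hl1
  · have : ‖z + a‖ ≤ ‖l • z + a‖ + (1 - l) * ‖z‖ := by
      calc ‖z + a‖ = ‖(l • z + a) + (1 - l) • z‖ := by congr 1; module
        _ ≤ ‖l • z + a‖ + ‖(1 - l) • z‖ := norm_add_le _ _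
        _ = _ := by rw [norm_smul, Real.norm_of_nonneg (sub_nonneg.2 hl1)]
    nlinarith
  · have : l * ‖z + a‖ ≤ ‖l • z + a‖ + (l - 1) * ‖a‖ := by
      calc l * ‖z + a‖ = ‖l • (z + a)‖ := by rw [norm_smul, Real.norm_of_nonneg hl]
        _ = ‖(l • z + a) + (l - 1) • a‖ := by congr 1; module
        _ ≤ ‖l • z + a‖ + ‖(l - 1) • a‖ := norm_add_le _ _
        _ = _ := by rw [norm_smul, Real.norm_of_nonneg (sub_nonneg.2 hl1)]
    nlinarith

theorem one_sub_two_mul_le_norm_smul_add {z a y : Z} {δ l : ℝ} (hz : ‖z‖ ≤ 1)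
    (ha : ‖a‖ ≤ 1) (hza : 2 - δ ≤ ‖z + a‖) (hy : y ≠ 0) (hya : dist (‖y‖⁻¹ • y) a ≤ δ)
    (hl : 0 ≤ l) : (1 - 2 * δ) * (l + ‖y‖) ≤ ‖l • z + y‖ := by
  set r := ‖y‖
  have hr : 0 < r := norm_pos_iff.2 hy
  have hδ : 0 ≤ δ := dist_nonneg.trans hya
  have hscaled := one_add_mul_one_sub_le_norm_smul_add hz ha hza (div_nonneg hl hr.le)
  have hnear : ‖(l / r) • z + a‖ - δ ≤ ‖(l / r) • z + r⁻¹ • y‖ := by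
    have := norm_sub_norm_le ((l / r) • z + a) ((l / r) • z + r⁻¹ • y)
    rw [add_sub_add_left_eq_sub, norm_sub_rev, ← dist_eq_norm] at this
    linarith
  calc (1 - 2 * δ) * (l + r) = r * ((1 + l / r) * (1 - δ) - δ) - r * (l / r) * δ := by
        field_simp; ring
    _ ≤ r * ‖(l / r) • z + r⁻¹ • y‖ := by
        nlinarith [mul_nonneg (mul_nonneg hr.le (div_nonneg hl hr.le)) hδ]
    _ = ‖l • z + y‖ := by
        rw [← Real.norm_of_nonneg hr.le, ← norm_smul, Real.norm_of_nonneg hr.le, smul_add,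
          smul_smul, smul_smul, mul_div_cancel₀ _ hr.ne', mul_inv_cancel₀ hr.ne', one_smul]

theorem isOctahedral_of_forall_finset
    (h : ∀ A : Finset Z, (∀ a ∈ A, ‖a‖ = 1) → ∀ δ > 0,
      ∃ z : Z, ‖z‖ = 1 ∧ ∀ a ∈ A, 2 - δ ≤ ‖z + a‖) :
    IsOctahedral Z := by
  intro ε hε Y hY
  have hS : IsCompact (Subtype.val '' sphere (0 : Y) 1) :=
    (isCompact_sphere 0 1).image continuous_subtype_val
  obtain ⟨net, hnetS, hnet, hcover⟩ :=
    finite_approx_of_totallyBounded hS.totallyBounded (ε / 2) (half_pos hε)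
  have hnet1 : ∀ a ∈ hnet.toFinset, ‖a‖ = 1 := fun a ha => by
    obtain ⟨y, hy, rfl⟩ := hnetS (hnet.mem_toFinset.1 ha)
    simpa using hy
  obtain ⟨z, hz, hza⟩ := h hnet.toFinset hnet1 (ε / 2) (half_pos hε)
  have hpos : ∀ y ∈ Y, ∀ l : ℝ, 0 ≤ l → (1 - ε) * (l + ‖y‖) ≤ ‖l • z + y‖ := by
    intro y hy l hl
    rcases eq_or_ne y 0 with rfl | hy0
    · rw [norm_zero, add_zero, add_zero, norm_smul, hz, Real.norm_of_nonneg hl]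
      nlinarith
    have hu : ‖y‖⁻¹ • y ∈ Subtype.val '' sphere (0 : Y) 1 :=
      ⟨⟨‖y‖⁻¹ • y, Y.smul_mem _ hy⟩, by simp [norm_smul, hy0], rfl⟩
    obtain ⟨a, ha, hua⟩ := Set.mem_iUnion₂.1 (hcover hu)
    have ha' := hnet.mem_toFinset.2 ha
    simpa [mul_div_cancel₀] using one_sub_two_mul_le_norm_smul_add hz.le (hnet1 a ha').le
      (hza a ha') hy0 (mem_ball.1 hua).le hl
  refine ⟨z, hz, fun y hy l => ?_⟩
  rcases le_total 0 l with hl | hl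
  · simpa [abs_of_nonneg hl] using hpos y hy l hl
  · have := hpos (-y) (Y.neg_mem hy) (-l) (neg_nonneg.2 hl)
    rw [abs_of_nonpos hl]
    rwa [norm_neg, neg_smul, ← neg_add, norm_neg] at this

end Octahedral

theorem admissibleD_empty : AdmissibleD ∅ := ⟨0, 0, le_rfl, by simp, by simp⟩

theorem AdmissibleD.pairwiseDisjoint {F : Finset (Finset (ℕ × ℕ))} (hF : AdmissibleD F) :
    (F : Set (Finset (ℕ × ℕ))).PairwiseDisjoint id :=
  let ⟨_, _, _, _, hdisj⟩ := hF
  fun S hS S' hS' hne => hdisj S hS S' hS' hne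

theorem sum_abs_le_sum_abs_support {α : Type*} (x : α →₀ ℝ) (A : Finset α) :
    ∑ t ∈ A, |x t| ≤ x.sum fun _ r => |r| := by
  classical
  calc ∑ t ∈ A, |x t| ≤ ∑ t ∈ A ∪ x.support, |x t| :=
        sum_le_sum_of_subset_of_nonneg subset_union_left fun _ _ _ => abs_nonneg _
    _ = x.sum fun _ r => |r| :=
        (sum_subset subset_union_right fun t _ ht => by
          rw [Finsupp.notMem_support_iff.1 ht, abs_zero]).symm

theorem AdmissibleD.sum_abs_le {F : Finset (Finset (ℕ × ℕ))} (hF : AdmissibleD F)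
    (x : (ℕ × ℕ) →₀ ℝ) : ∑ S ∈ F, |∑ t ∈ S, x t| ≤ x.sum fun _ r => |r| := by
  classical
  calc ∑ S ∈ F, |∑ t ∈ S, x t| ≤ ∑ S ∈ F, ∑ t ∈ S, |x t| :=
        sum_le_sum fun S _ => abs_sum_le_sum_abs _ _
    _ = ∑ t ∈ F.biUnion id, |x t| := (sum_biUnion hF.pairwiseDisjoint).symm
    _ ≤ _ := sum_abs_le_sum_abs_support x _

theorem AdmissibleD.le_jhNorm {F : Finset (Finset (ℕ × ℕ))} (hF : AdmissibleD F)
    (x : (ℕ × ℕ) →₀ ℝ) : ∑ S ∈ F, |∑ t ∈ S, x t| ≤ jhNorm x :=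
  le_csSup ⟨_, by rintro _ ⟨F, hF, rfl⟩; exact hF.sum_abs_le x⟩ ⟨F, hF, rfl⟩

theorem jhNorm_le {x : (ℕ × ℕ) →₀ ℝ} {B : ℝ}
    (h : ∀ F, AdmissibleD F → ∑ S ∈ F, |∑ t ∈ S, x t| ≤ B) : jhNorm x ≤ B :=
  csSup_le ⟨_, ∅, admissibleD_empty, rfl⟩ (by rintro _ ⟨F, hF, rfl⟩; exact h F hF)

theorem jhNorm_le_sum_abs (x : (ℕ × ℕ) →₀ ℝ) : jhNorm x ≤ x.sum fun _ r => |r| :=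
  jhNorm_le fun _ hF => hF.sum_abs_le x

section Segment

variable {S : Finset (ℕ × ℕ)} {p q : ℕ}

theorem IsPQSegD.injOn_fst (hS : IsPQSegD S p q) : Set.InjOn Prod.fst (S : Set (ℕ × ℕ)) := by
  intro s hs t ht hst
  obtain ⟨_, hlevel, hunique, _⟩ := hS
  obtain ⟨hp, hq⟩ := hlevel s hs
  exact (hunique s.1 hp hq).unique ⟨hs, rfl⟩ ⟨ht, hst.symm⟩

theorem IsPQSegD.exists_fst_eq (hS : IsPQSegD S p q) {k : ℕ} (hpk : p ≤ k) (hkq : k ≤ q) :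
    ∃ t ∈ S, t.1 = k :=
  let ⟨t, ⟨ht, htk⟩, _⟩ := hS.2.2.1 k hpk hkq
  ⟨t, ht, htk⟩

theorem IsPQSegD.sum_half_pow_fst_le (hS : IsPQSegD S p q) :
    ∑ t ∈ S, (1 / 2 : ℝ) ^ t.1 ≤ 2 * (1 / 2) ^ p := by
  classical
  have himage : S.image Prod.fst ⊆ Ico p (q + 1) := by
    intro k hk
    obtain ⟨t, ht, rfl⟩ := mem_image.1 hk
    exact mem_Ico.2 ⟨(hS.2.1 t ht).1, Nat.lt_succ_of_le (hS.2.1 t ht).2⟩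
  calc ∑ t ∈ S, (1 / 2 : ℝ) ^ t.1 = ∑ k ∈ S.image Prod.fst, (1 / 2 : ℝ) ^ k :=
        (sum_image hS.injOn_fst).symm
    _ ≤ ∑ k ∈ Ico p (q + 1), (1 / 2 : ℝ) ^ k :=
        sum_le_sum_of_subset_of_nonneg himage fun _ _ _ => by positivity
    _ ≤ (1 / 2) ^ p / (1 - 1 / 2) := geom_sum_Ico_le_of_lt_one (by norm_num) (by norm_num)
    _ = 2 * (1 / 2) ^ p := by ring

end Segment

theorem card_le_two_pow {F : Finset (Finset (ℕ × ℕ))} {p q : ℕ} (hpq : p ≤ q)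
    (hseg : ∀ S ∈ F, IsPQSegD S p q) (hdisj : ∀ S ∈ F, ∀ S' ∈ F, S ≠ S' → Disjoint S S') :
    #F ≤ 2 ^ p := by
  choose! φ hφS hφp using fun S hS => (hseg S hS).exists_fst_eq le_rfl hpq
  -- disjoint segments meet level `p` in distinct nodes `(p, j)`, `j < 2 ^ p`
  calc #F ≤ #(range (2 ^ p)) := by
        refine card_le_card_of_injOn (fun S => (φ S).2) (fun S hS => ?_) fun S hS S' hS' h => ?_
        · have := (hseg S hS).1 _ (hφS S hS)
          rw [hφp S hS] at this
          exact mem_range.2 this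
        · by_contra hne
          have : φ S = φ S' := Prod.ext ((hφp S hS).trans (hφp S' hS').symm) h
          exact disjoint_left.1 (hdisj S hS S' hS' hne) (hφS S hS) (this ▸ hφS S' hS')
    _ = 2 ^ p := card_range _

theorem jhNorm_le_two {x : (ℕ × ℕ) →₀ ℝ} (hx : ∀ t, |x t| ≤ (1 / 2 : ℝ) ^ t.1) :
    jhNorm x ≤ 2 := by
  refine jhNorm_le fun F ⟨p, q, hpq, hseg, hdisj⟩ => ?_
  calc ∑ S ∈ F, |∑ t ∈ S, x t| ≤ ∑ _S ∈ F, 2 * (1 / 2 : ℝ) ^ p :=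
        sum_le_sum fun S hS => (abs_sum_le_sum_abs _ _).trans
          ((sum_le_sum fun t _ => hx t).trans (hseg S hS).sum_half_pow_fst_le)
    _ ≤ 2 ^ p * (2 * (1 / 2) ^ p) := by
        rw [sum_const, nsmul_eq_mul]
        gcongr
        exact_mod_cast card_le_two_pow hpq hseg hdisj
    _ = 2 := by rw [mul_left_comm, ← mul_pow]; norm_num

theorem jhNorm_add_le {c z : (ℕ × ℕ) →₀ ℝ} {N : ℕ} {β : ℝ} (hc : ∀ t ∈ c.support, t.1 < N)
    (hz : ∀ S p q, IsPQSegD S p q → |∑ t ∈ S, z t| ≤ β) (hβ : 0 ≤ β) :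
    jhNorm (c + z) ≤ max (jhNorm c) (jhNorm z) + 2 ^ N * β := by
  refine jhNorm_le fun F hF => ?_
  have ⟨p, q, hpq, hseg, hdisj⟩ := hF
  simp only [Finsupp.add_apply, sum_add_distrib]
  rcases lt_or_ge p N with hpN | hNp
  · calc ∑ S ∈ F, |∑ t ∈ S, c t + ∑ t ∈ S, z t| ≤ ∑ S ∈ F, (|∑ t ∈ S, c t| + β) :=
          sum_le_sum fun S hS => (abs_add_le _ _).trans (by gcongr; exact hz S p q (hseg S hS))
      _ = ∑ S ∈ F, |∑ t ∈ S, c t| + #F * β := by rw [sum_add_distrib, sum_const, nsmul_eq_mul]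
      _ ≤ max (jhNorm c) (jhNorm z) + 2 ^ N * β := by
          gcongr
          · exact (hF.le_jhNorm c).trans (le_max_left _ _)
          · calc (#F : ℝ) ≤ 2 ^ p := by exact_mod_cast card_le_two_pow hpq hseg hdisj
              _ ≤ 2 ^ N := pow_le_pow_right₀ one_le_two hpN.le
  · -- every segment starts at level `p ≥ N`, where `c` vanishes
    have hc0 : ∀ S ∈ F, ∑ t ∈ S, c t = 0 := fun S hS => sum_eq_zero fun t ht =>
      Finsupp.notMem_support_iff.1 fun h => by have := hc t h; have := (hseg S hS).2.1 t ht; omega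
    calc ∑ S ∈ F, |∑ t ∈ S, c t + ∑ t ∈ S, z t| = ∑ S ∈ F, |∑ t ∈ S, z t| :=
          sum_congr rfl fun S hS => by rw [hc0 S hS, zero_add]
      _ ≤ jhNorm z := hF.le_jhNorm z
      _ ≤ max (jhNorm c) (jhNorm z) + 2 ^ N * β :=
          le_add_of_le_of_nonneg (le_max_right _ _) (by positivity)

namespace JamesHagler

def tree : Set (ℕ × ℕ) := {t | t.2 < 2 ^ t.1}

def level (k : ℕ) : Finset (ℕ × ℕ) := (range (2 ^ k)).map (Function.Embedding.sectR k ℕ)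

theorem mem_level {k : ℕ} {t : ℕ × ℕ} : t ∈ level k ↔ t.1 = k ∧ t.2 < 2 ^ k := by
  obtain ⟨i, j⟩ := t
  simp [level, and_comm, eq_comm]

theorem level_subset_tree (k : ℕ) : (level k : Set (ℕ × ℕ)) ⊆ tree := fun t ht => by
  obtain ⟨rfl, h⟩ := mem_level.1 ht
  exact h

theorem sum_level_half_pow (k : ℕ) : ∑ _t ∈ level k, (1 / 2 : ℝ) ^ k = 1 := by
  rw [sum_const, level, card_map, card_range, nsmul_eq_mul, Nat.cast_pow, ← mul_pow]
  norm_num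

noncomputable def levelSum (k : ℕ) : ((ℕ × ℕ) →₀ ℝ) →ₗ[ℝ] ℝ := ∑ t ∈ level k, Finsupp.lapply t

theorem levelSum_apply (k : ℕ) (c : (ℕ × ℕ) →₀ ℝ) : levelSum k c = ∑ t ∈ level k, c t := by
  simp [levelSum]

theorem abs_levelSum_le_jhNorm (k : ℕ) (c : (ℕ × ℕ) →₀ ℝ) : |levelSum k c| ≤ jhNorm c := by
  -- the singletons of level `k` form an admissible family
  set F := (level k).map ⟨singleton, singleton_injective⟩
  have hF : AdmissibleD F := by
    refine ⟨k, k, le_rfl, fun S hS => ?_, fun S hS S' hS' hne => ?_⟩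
    · obtain ⟨t, ht, rfl⟩ := mem_map.1 hS
      obtain ⟨htk, ht2⟩ := mem_level.1 ht
      refine ⟨by simpa [htk] using ht2, by simp [htk], fun i hi hi' => ⟨t, by simp [htk]; omega,
        fun s hs => by simpa using hs.1⟩, by simp [dLe]⟩
    · obtain ⟨t, -, rfl⟩ := mem_map.1 hS
      obtain ⟨t', -, rfl⟩ := mem_map.1 hS'
      exact disjoint_singleton.2 fun h => hne (by simp [h])
  calc |levelSum k c| ≤ ∑ t ∈ level k, |c t| := by
        rw [levelSum_apply]; exact abs_sum_le_sum_abs _ _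
    _ = ∑ S ∈ F, |∑ t ∈ S, c t| := by simp [F]
    _ ≤ jhNorm c := hF.le_jhNorm c

noncomputable def levelAverage (k : ℕ) : (ℕ × ℕ) →₀ ℝ :=
  Finsupp.onFinset (level k) (fun t => if t ∈ level k then (1 / 2 : ℝ) ^ k else 0)
    fun t ht => by by_contra h; exact ht (if_neg h)

theorem levelAverage_apply (k : ℕ) (t : ℕ × ℕ) :
    levelAverage k t = if t ∈ level k then (1 / 2 : ℝ) ^ k else 0 := rfl

theorem levelAverage_mem_supported (k : ℕ) : levelAverage k ∈ Finsupp.supported ℝ ℝ tree :=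
  (Finsupp.mem_supported ℝ _).2 <|
    (Finset.coe_subset.2 Finsupp.support_onFinset_subset).trans (level_subset_tree k)

theorem jhNorm_levelAverage_le_one (k : ℕ) : jhNorm (levelAverage k) ≤ 1 := by
  refine (jhNorm_le_sum_abs _).trans_eq ?_
  rw [levelAverage, Finsupp.onFinset_sum _ fun _ => abs_zero]
  exact (sum_congr rfl fun t ht => by rw [if_pos ht, abs_of_nonneg (by positivity)]).trans
    (sum_level_half_pow k)

theorem levelSum_levelAverage (k : ℕ) : levelSum k (levelAverage k) = 1 := by
  rw [levelSum_apply]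
  exact (sum_congr rfl fun t ht => if_pos ht).trans (sum_level_half_pow k)

theorem levelSum_eq_zero_of_fst_lt {c : (ℕ × ℕ) →₀ ℝ} {k : ℕ}
    (hc : ∀ t ∈ c.support, t.1 < k) : levelSum k c = 0 := by
  rw [levelSum_apply]
  exact sum_eq_zero fun t ht => Finsupp.notMem_support_iff.1 fun h =>
    (hc t h).ne (mem_level.1 ht).1

theorem abs_levelAverage_le (k : ℕ) (t : ℕ × ℕ) : |levelAverage k t| ≤ (1 / 2 : ℝ) ^ t.1 := by
  rw [levelAverage_apply]
  split_ifs with h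
  · rw [(mem_level.1 h).1, abs_of_nonneg (by positivity)]
  · rw [abs_zero]; positivity

theorem levelAverage_eq_zero_of_fst_ne {k : ℕ} {t : ℕ × ℕ} (h : t.1 ≠ k) :
    levelAverage k t = 0 :=
  if_neg fun ht => h (mem_level.1 ht).1

theorem _root_.IsPQSegD.abs_sum_levelAverage_le {S : Finset (ℕ × ℕ)} {p q : ℕ}
    (hS : IsPQSegD S p q) (k : ℕ) : |∑ t ∈ S, levelAverage k t| ≤ (1 / 2 : ℝ) ^ k := by
  classical
  have hcard : #(S ∩ level k) ≤ 1 := card_le_one.2 fun s hs t ht =>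
    hS.injOn_fst (mem_inter.1 hs).1 (mem_inter.1 ht).1
      ((mem_level.1 (mem_inter.1 hs).2).1.trans (mem_level.1 (mem_inter.1 ht).2).1.symm)
  simp only [levelAverage_apply, sum_ite_mem, sum_const, nsmul_eq_mul]
  rw [abs_of_nonneg (by positivity)]
  exact mul_le_of_le_one_left (by positivity) (by exact_mod_cast hcard)

end JamesHagler

section Dual

variable {X : Type*} [NormedAddCommGroup X] [NormedSpace ℝ X]

theorem exists_dual_comp_eq_of_abs_le {V : Type*} [AddCommGroup V] [Module ℝ V]
    (Φ : V →ₗ[ℝ] X) (ℓ : V →ₗ[ℝ] ℝ) (h : ∀ v, |ℓ v| ≤ ‖Φ v‖) :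
    ∃ f : X →L[ℝ] ℝ, ‖f‖ ≤ 1 ∧ ∀ v, f (Φ v) = ℓ v := by
  have hker : LinearMap.ker Φ ≤ LinearMap.ker ℓ := fun v hv => by
    have := h v
    rw [LinearMap.mem_ker.1 hv, norm_zero] at this
    exact LinearMap.mem_ker.2 (abs_nonpos_iff.1 this)
  set L : LinearMap.range Φ →ₗ[ℝ] ℝ :=
    (LinearMap.ker Φ).liftQ ℓ hker ∘ₗ Φ.quotKerEquivRange.symm.toLinearMap
  have hL : ∀ v, L ⟨Φ v, LinearMap.mem_range_self Φ v⟩ = ℓ v := fun v => by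
    simp [L, LinearMap.quotKerEquivRange_symm_apply_image]
  set f₀ := L.mkContinuous 1 (by rintro ⟨_, v, rfl⟩; simpa [hL] using h v)
  obtain ⟨f, hf, hfnorm⟩ := exists_extension_norm_eq (LinearMap.range Φ) f₀
  exact ⟨f, hfnorm ▸ L.mkContinuous_norm_le zero_le_one _, fun v => (hf _).trans (hL v)⟩

theorem Dense.exists_norm_lt_one_lt_apply {D : Set X} (hD : Dense D) (a : X →L[ℝ] ℝ) {r : ℝ}
    (hr : r < ‖a‖) : ∃ x ∈ D, ‖x‖ < 1 ∧ r < a x := by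
  obtain ⟨x, hx, hrx⟩ := a.exists_lt_apply_of_lt_opNorm hr
  have hne : ∃ y : X, ‖y‖ < 1 ∧ r < a y := by
    rcases le_total 0 (a x) with h | h
    · exact ⟨x, hx, by rwa [Real.norm_of_nonneg h] at hrx⟩
    · exact ⟨-x, by rwa [norm_neg], by rwa [map_neg, ← Real.norm_of_nonpos h]⟩
  exact hD.exists_mem_open
    ((isOpen_lt continuous_norm continuous_const).inter (isOpen_lt continuous_const a.continuous))
    hne

end Dual

namespace JamesHagler

open Finsupp (linearCombination supported)

variable {X : Type*} [NormedAddCommGroup X] [NormedSpace ℝ X] (e : ℕ × ℕ → X)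
  (hnorm : ∀ x ∈ supported ℝ ℝ tree, ‖linearCombination ℝ e x‖ = jhNorm x)
include hnorm

theorem exists_dual_levelSum (k : ℕ) :
    ∃ f : X →L[ℝ] ℝ, ‖f‖ = 1 ∧
      ∀ c ∈ supported ℝ ℝ tree, f (linearCombination ℝ e c) = levelSum k c := by
  obtain ⟨f, hf1, hf⟩ := exists_dual_comp_eq_of_abs_le
    (linearCombination ℝ e ∘ₗ (supported ℝ ℝ tree).subtype)
    (levelSum k ∘ₗ (supported ℝ ℝ tree).subtype)
    fun c : supported ℝ ℝ tree => by simpa [hnorm c c.2] using abs_levelSum_le_jhNorm k c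
  refine ⟨f, le_antisymm hf1 ?_, fun c hc => hf ⟨c, hc⟩⟩
  have hζ := hf ⟨levelAverage k, levelAverage_mem_supported k⟩
  simp only [LinearMap.comp_apply, Submodule.subtype_apply, levelSum_levelAverage] at hζ
  calc (1 : ℝ) ≤ ‖f‖ * ‖linearCombination ℝ e (levelAverage k)‖ := by
        simpa [hζ] using f.le_opNorm (linearCombination ℝ e (levelAverage k))
    _ ≤ ‖f‖ := by
        rw [hnorm _ (levelAverage_mem_supported k)]
        exact mul_le_of_le_one_right (norm_nonneg f) (jhNorm_levelAverage_le_one k)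

theorem summable_abs_apply_levelAverage (g : X →L[ℝ] ℝ) :
    Summable fun k => |g (linearCombination ℝ e (levelAverage k))| := by
  refine summable_of_sum_range_le (c := 2 * ‖g‖) (fun _ => abs_nonneg _) fun K => ?_
  set s : ℕ → ℝ := fun k => SignType.sign (g (linearCombination ℝ e (levelAverage k)))
  set w := ∑ k ∈ range K, s k • levelAverage k
  have hw : ∀ t, |w t| ≤ (1 / 2 : ℝ) ^ t.1 := fun t => by
    have hs : |s t.1| ≤ 1 := by
      rcases SignType.trichotomy (SignType.sign (g (linearCombination ℝ e (levelAverage t.1))))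
        with h | h | h <;> simp [s, h]
    simp only [w, Finsupp.finsetSum_apply, Finsupp.smul_apply, smul_eq_mul]
    rcases lt_or_ge t.1 K with htK | htK
    · rw [sum_eq_single_of_mem t.1 (mem_range.2 htK) fun k _ hk => by
        rw [levelAverage_eq_zero_of_fst_ne (Ne.symm hk), mul_zero], abs_mul]
      exact (mul_le_of_le_one_left (abs_nonneg _) hs).trans (abs_levelAverage_le _ t)
    · rw [sum_eq_zero fun k hk => by
        rw [levelAverage_eq_zero_of_fst_ne (by have := mem_range.1 hk; omega), mul_zero],
        abs_zero]
      positivity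
  have hwT : w ∈ supported ℝ ℝ tree :=
    sum_mem fun k _ => Submodule.smul_mem _ _ (levelAverage_mem_supported k)
  calc ∑ k ∈ range K, |g (linearCombination ℝ e (levelAverage k))|
        = g (linearCombination ℝ e w) := by simp [w, s, map_sum, sign_mul_self]
    _ ≤ ‖g‖ * ‖linearCombination ℝ e w‖ := (le_abs_self _).trans (g.le_opNorm _)
    _ ≤ ‖g‖ * 2 := by
        rw [hnorm w hwT]; exact mul_le_mul_of_nonneg_left (jhNorm_le_two hw) (norm_nonneg g)
    _ = 2 * ‖g‖ := mul_comm _ _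

theorem exists_supported_jhNorm_lt_one_lt_apply
    (hdense : Dense (Submodule.span ℝ (e '' tree) : Set X)) (a : X →L[ℝ] ℝ) {r : ℝ}
    (hr : r < ‖a‖) :
    ∃ c ∈ supported ℝ ℝ tree, jhNorm c < 1 ∧ r < a (linearCombination ℝ e c) := by
  obtain ⟨x, hx, hx1, hrx⟩ := hdense.exists_norm_lt_one_lt_apply a hr
  obtain ⟨c, hc, rfl⟩ := Finsupp.mem_span_image_iff_linearCombination ℝ |>.1 hx
  exact ⟨c, hc, hnorm c hc ▸ hx1, hrx⟩

theorem two_sub_four_mul_le_norm_add {f a : X →L[ℝ] ℝ} {c : (ℕ × ℕ) →₀ ℝ} {k N : ℕ} {η : ℝ}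
    (hf : ∀ c ∈ supported ℝ ℝ tree, f (linearCombination ℝ e c) = levelSum k c)
    (hc : c ∈ supported ℝ ℝ tree) (hc1 : jhNorm c < 1) (hca : 1 - η < a (linearCombination ℝ e c))
    (hcN : ∀ t ∈ c.support, t.1 < N) (hNk : N ≤ k) (hk : 2 ^ N * (1 / 2 : ℝ) ^ k < η)
    (hak : |a (linearCombination ℝ e (levelAverage k))| < η) :
    2 - 4 * η ≤ ‖f + a‖ := by
  have hη : 0 < η := lt_of_le_of_lt (by positivity) hk
  -- test `f + a` on `c + levelAverage k`: `f` sees only the level `k ≥ N`, `a` almost only `c`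
  set w := c + levelAverage k
  have hw : w ∈ supported ℝ ℝ tree := add_mem hc (levelAverage_mem_supported k)
  have hwnorm : ‖linearCombination ℝ e w‖ ≤ 1 + η := by
    rw [hnorm w hw]
    calc jhNorm w ≤ max (jhNorm c) (jhNorm (levelAverage k)) + 2 ^ N * (1 / 2) ^ k :=
          jhNorm_add_le hcN (fun _ _ _ hS => hS.abs_sum_levelAverage_le k) (by positivity)
      _ ≤ 1 + η := add_le_add (max_le hc1.le (jhNorm_levelAverage_le_one k)) hk.le
  have hfw : f (linearCombination ℝ e w) = 1 := by
    rw [hf w hw, map_add, levelSum_levelAverage,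
      levelSum_eq_zero_of_fst_lt fun t ht => (hcN t ht).trans_le hNk, zero_add]
  have haw : 1 - 2 * η < a (linearCombination ℝ e w) := by
    rw [map_add, map_add]
    linarith [neg_abs_le (a (linearCombination ℝ e (levelAverage k)))]
  have : 2 - 2 * η < ‖f + a‖ * (1 + η) :=
    calc 2 - 2 * η < (f + a) (linearCombination ℝ e w) := by
          change _ < f _ + a _
          linarith
      _ ≤ ‖f + a‖ * ‖linearCombination ℝ e w‖ := (le_abs_self _).trans ((f + a).le_opNorm _)
      _ ≤ ‖f + a‖ * (1 + η) := mul_le_mul_of_nonneg_left hwnorm (norm_nonneg _)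
  by_contra! hlt
  nlinarith [mul_lt_mul_of_pos_right hlt (by linarith : (0 : ℝ) < 1 + η)]

theorem exists_two_sub_le_norm_add
    (hdense : Dense (Submodule.span ℝ (e '' tree) : Set X)) (A : Finset (X →L[ℝ] ℝ))
    (hA : ∀ a ∈ A, ‖a‖ = 1) (δ : ℝ) (hδ : 0 < δ) :
    ∃ f : X →L[ℝ] ℝ, ‖f‖ = 1 ∧ ∀ a ∈ A, 2 - δ ≤ ‖f + a‖ := by
  obtain ⟨η, hη, rfl⟩ : ∃ η, 0 < η ∧ δ = 4 * η := ⟨δ / 4, by positivity, by ring⟩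
  have hnorming : ∀ᶠ N in atTop, ∀ a ∈ A, ∃ c ∈ supported ℝ ℝ tree, jhNorm c < 1 ∧
      1 - η < a (linearCombination ℝ e c) ∧ ∀ t ∈ c.support, t.1 < N := by
    refine (eventually_all_finset A).2 fun a ha => ?_
    obtain ⟨c, hc, hc1, hca⟩ := exists_supported_jhNorm_lt_one_lt_apply e hnorm hdense a
      (r := 1 - η) (by linarith [hA a ha])
    refine eventually_atTop.2 ⟨c.support.sup Prod.fst + 1, fun N hN => ⟨c, hc, hc1, hca,
      fun t ht => ?_⟩⟩
    have := le_sup (f := Prod.fst) ht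
    omega
  obtain ⟨N, hN⟩ := hnorming.exists
  have hgeom : Tendsto (fun k : ℕ => 2 ^ N * (1 / 2 : ℝ) ^ k) atTop (nhds 0) := by
    simpa using (tendsto_pow_atTop_nhds_zero_of_lt_one (by norm_num : (0 : ℝ) ≤ 1 / 2)
      (by norm_num)).const_mul (2 ^ N : ℝ)
  obtain ⟨k, hNk, hk, hkA⟩ := ((eventually_ge_atTop N).and ((hgeom.eventually_lt_const hη).and
    ((eventually_all_finset A).2 fun a _ =>
      (summable_abs_apply_levelAverage e hnorm a).tendsto_atTop_zero.eventually_lt_const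
        hη))).exists
  obtain ⟨f, hf1, hf⟩ := exists_dual_levelSum e hnorm k
  refine ⟨f, hf1, fun a ha => ?_⟩
  obtain ⟨c, hc, hc1, hca, hcN⟩ := hN a ha
  exact two_sub_four_mul_le_norm_add e hnorm hf hc hc1 hca hcN hNk hk (hkA a ha)

end JamesHagler

theorem stmt6_general (X : Type*) [NormedAddCommGroup X] [NormedSpace ℝ X]
    (e : ℕ × ℕ → X)
    (hnorm : ∀ x : (ℕ × ℕ) →₀ ℝ, (∀ t ∈ x.support, t.2 < 2 ^ t.1) →
      ‖∑ t ∈ x.support, x t • e t‖ = jhNorm x)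
    (hdense : Dense (Submodule.span ℝ (e '' {t : ℕ × ℕ | t.2 < 2 ^ t.1}) : Set X)) :
    ∀ ε : ℝ, 0 < ε → ∀ Y : Submodule ℝ (X →L[ℝ] ℝ), FiniteDimensional ℝ Y →
      ∃ f : X →L[ℝ] ℝ, ‖f‖ = 1 ∧
        ∀ g ∈ Y, ∀ l : ℝ, (1 - ε) * (|l| + ‖g‖) ≤ ‖l • f + g‖ := by
  have hnorm' : ∀ x ∈ Finsupp.supported ℝ ℝ JamesHagler.tree,
      ‖Finsupp.linearCombination ℝ e x‖ = jhNorm x := fun x hx =>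
    hnorm x ((Finsupp.mem_supported ℝ x).1 hx)
  exact isOctahedral_of_forall_finset (JamesHagler.exists_two_sub_le_norm_add e hnorm' hdense)

/-- The norm of `JH*` is octahedral: for every `ε > 0` and every
finite-dimensional subspace `Y` of `JH*` there is a norm-one `f ∈ JH*` with
`‖λ f + g‖ ≥ (1-ε)(|λ| + ‖g‖)` for all `g ∈ Y` and all scalars `λ`. -/
theorem stmt6 (X : Type*) [NormedAddCommGroup X] [NormedSpace ℝ X] [CompleteSpace X]
    (e : ℕ × ℕ → X)
    (hnorm : ∀ x : (ℕ × ℕ) →₀ ℝ, (∀ t ∈ x.support, t.2 < 2 ^ t.1) →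
      ‖∑ t ∈ x.support, x t • e t‖ = jhNorm x)
    (hdense : Dense (Submodule.span ℝ (e '' {t : ℕ × ℕ | t.2 < 2 ^ t.1}) : Set X)) :
    ∀ ε : ℝ, 0 < ε → ∀ Y : Submodule ℝ (X →L[ℝ] ℝ), FiniteDimensional ℝ Y →
      ∃ f : X →L[ℝ] ℝ, ‖f‖ = 1 ∧
        ∀ g ∈ Y, ∀ l : ℝ, (1 - ε) * (|l| + ‖g‖) ≤ ‖l • f + g‖ :=
  stmt6_general X e hnorm hdense
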